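/- The arithmetic function b₄, where b₄(n) is the number of primitive Dirichlet characters χ modulo n (with complex values) satisfying χ⁴ = 1, is multiplicative, and its values on prime powers are: b₄(4) = 1, b₄(8) = 2, b₄(16) = 4, and b₄(2^r) = 0 for r = 1 and r ≥ 5; and for every odd prime p and every r ≥ 1, b₄(p^r) = 1 if r = 1 and p ≡ 3 (mod 4), b₄(p^r) = 3 if r = 1 and p ≡ 1 (mod 4), and b₄(p^r) = 0 if r ≥ 2. -/

import Mathlib

/-- `b₄ n` is the number of primitive Dirichlet characters `χ` modulo `n` with values in `ℂ`
satisfying `χ ^ 4 = 1`. -/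
noncomputable def b₄ (n : ℕ) : ℕ :=
  Nat.card {χ : DirichletCharacter ℂ n // χ.IsPrimitive ∧ χ ^ 4 = 1}

/-!
Write `a(n)` for the number of characters mod `n` with `χ ^ k = 1` and `b(n)` for the number of
primitive ones. By duality `a(n)` is the number of solutions of `u ^ k = 1` in `(ZMod n)ˣ`, so it
is multiplicative by the Chinese remainder theorem, equals `gcd(φ(n), k)` when `(ZMod n)ˣ` is
cyclic, and is a finite computation for `n ∣ 16`. Every character is induced from a unique
primitive character whose level is its conductor, so `a(n) = ∑_{d ∣ n} b(d)`: Möbius inversion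
makes `b` multiplicative and gives `b(p ^ (r + 1)) = a(p ^ (r + 1)) - a(p ^ r)`. For `2 ^ r` with
`r ≥ 5`, where `(ZMod (2 ^ r))ˣ` is not cyclic, the kernel of reduction mod `16` consists of
fourth powers, so every `χ` with `χ ^ 4 = 1` factors through `16`.
-/

open ArithmeticFunction
open scoped ArithmeticFunction.zeta

section PowEqOne

variable {G H : Type*} [Monoid G] [Monoid H] (k : ℕ)

theorem MulEquiv.card_pow_eq_one (e : G ≃* H) :
    Nat.card {g : G // g ^ k = 1} = Nat.card {h : H // h ^ k = 1} :=
  Nat.card_congr <| e.toEquiv.subtypeEquiv fun g => by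
    rw [← e.map_eq_one_iff, map_pow]; rfl

theorem card_prod_pow_eq_one :
    Nat.card {x : G × H // x ^ k = 1} =
      Nat.card {g : G // g ^ k = 1} * Nat.card {h : H // h ^ k = 1} := by
  rw [← Nat.card_prod, ← Nat.card_congr Equiv.subtypeProdEquivProd]
  exact Nat.card_congr (Equiv.subtypeEquivRight fun x => by simp [Prod.ext_iff])

theorem IsCyclic.card_pow_eq_one {G : Type*} [CommGroup G] [IsCyclic G] [Finite G] :
    Nat.card {g : G // g ^ k = 1} = (Nat.card G).gcd k :=
  IsCyclic.card_powMonoidHom_ker (G := G) k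

end PowEqOne

theorem ArithmeticFunction.IsMultiplicative.of_mul_zeta {R : Type*} [CommRing R]
    {f : ArithmeticFunction R} (h : (f * (ζ : ArithmeticFunction R)).IsMultiplicative) :
    f.IsMultiplicative := by
  rw [← mul_one f, ← coe_zeta_mul_coe_moebius, ← mul_assoc]
  exact h.mul isMultiplicative_moebius.intCast

namespace ZMod

theorem card_units_pow_eq_one_mul (k : ℕ) {m n : ℕ} (h : m.Coprime n) :
    Nat.card {u : (ZMod (m * n))ˣ // u ^ k = 1} =
      Nat.card {u : (ZMod m)ˣ // u ^ k = 1} * Nat.card {u : (ZMod n)ˣ // u ^ k = 1} :=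
  ((Units.mapEquiv (chineseRemainder h).toMulEquiv).trans MulEquiv.prodUnits).card_pow_eq_one k
    |>.trans (card_prod_pow_eq_one k)

theorem card_ker_unitsMap_mul_totient {d n : ℕ} [NeZero n] (hd : d ∣ n) :
    Nat.card (unitsMap hd).ker * d.totient = n.totient := by
  have : NeZero d := ⟨fun h => NeZero.ne n (Nat.eq_zero_of_zero_dvd (h ▸ hd))⟩
  rw [← card_units_eq_totient, ← card_units_eq_totient, ← Nat.card_eq_fintype_card,
    ← Nat.card_eq_fintype_card, ← (unitsMap hd).ker.card_mul_index, Subgroup.index_ker,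
    MonoidHom.range_eq_top_of_surjective _ (unitsMap_surjective hd),
    Subgroup.card_top (G := (ZMod d)ˣ)]

/-- The kernel of reduction mod `16` is generated by `5 ^ 4 = 1 + 2 ^ 4 * 39`, whose order is
the size `2 ^ (r - 4)` of the kernel. -/
theorem ker_unitsMap_le_range_pow_four {r : ℕ} (hr : 4 ≤ r) :
    (unitsMap (pow_dvd_pow 2 hr)).ker ≤ (powMonoidHom 4).range := by
  obtain ⟨s, rfl⟩ := Nat.exists_eq_add_of_le' hr
  set K := (unitsMap (pow_dvd_pow 2 hr)).ker
  let g : (ZMod (2 ^ (s + 4)))ˣ := unitOfCoprime 5 (Nat.Coprime.pow_right _ (by norm_num))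
  have hg : ((g ^ 4 : (ZMod (2 ^ (s + 4)))ˣ) : ZMod (2 ^ (s + 4))) =
      1 + (2 : ℕ) ^ 4 * ((39 : ℤ) : ZMod (2 ^ (s + 4))) := by
    push_cast [g]; norm_num
  have hord : orderOf (g ^ 4) = 2 ^ s := by
    rw [← orderOf_units, hg]
    exact orderOf_one_add_mul_prime_pow Nat.prime_two 4 (by norm_num) (by norm_num) 39
      (by decide) s
  have hmem : g ^ 4 ∈ K := by
    rw [MonoidHom.mem_ker, map_pow, Units.ext_iff, Units.val_pow_eq_pow_val, unitsMap_val,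
      coe_unitOfCoprime, cast_natCast (pow_dvd_pow 2 hr)]
    decide
  have hcard : Nat.card K * 8 = 2 ^ s * 8 := by
    rw [show 8 = Nat.totient (2 ^ 4) by decide, card_ker_unitsMap_mul_totient,
      Nat.totient_prime_pow Nat.prime_two (by omega),
      Nat.totient_prime_pow Nat.prime_two (by omega), Nat.add_sub_assoc (by norm_num), pow_add]
    norm_num
  have hK : Subgroup.zpowers (g ^ 4) = K :=
    Subgroup.eq_of_le_of_card_ge (Subgroup.zpowers_le.mpr hmem) (by
      rw [Nat.card_zpowers, hord, Nat.eq_of_mul_eq_mul_right (by norm_num) hcard])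
  rw [← hK, Subgroup.zpowers_le]
  exact ⟨g, rfl⟩

end ZMod

namespace DirichletCharacter

section CommMonoidWithZero

variable (R : Type*) [CommMonoidWithZero R] (k : ℕ)

noncomputable def countPowEqOne (n : ℕ) : ℕ :=
  Nat.card {χ : DirichletCharacter R n // χ ^ k = 1}

noncomputable def countPrimitivePowEqOne (n : ℕ) : ℕ :=
  Nat.card {χ : DirichletCharacter R n // χ.IsPrimitive ∧ χ ^ k = 1}

theorem countPowEqOne_one : countPowEqOne R k 1 = 1 :=
  Nat.card_eq_one_iff_exists.mpr ⟨⟨1, one_pow k⟩, fun χ => Subtype.ext (level_one χ.1)⟩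

theorem countPrimitivePowEqOne_one : countPrimitivePowEqOne R k 1 = 1 :=
  Nat.card_eq_one_iff_exists.mpr ⟨⟨1, isPrimitive_one_level_one, one_pow k⟩,
    fun χ => Subtype.ext (level_one χ.1)⟩

variable {R k}

theorem card_conductor_eq_and_pow_eq_one {n d : ℕ} [NeZero n] (hd : d ∣ n) :
    Nat.card {χ : DirichletCharacter R n // χ.conductor = d ∧ χ ^ k = 1} =
      countPrimitivePowEqOne R k d := by
  have : NeZero d := ⟨fun h => NeZero.ne n (Nat.eq_zero_of_zero_dvd (h ▸ hd))⟩
  let f (ψ : {ψ : DirichletCharacter R d // ψ.IsPrimitive ∧ ψ ^ k = 1}) :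
      {χ : DirichletCharacter R n // χ.conductor = d ∧ χ ^ k = 1} :=
    ⟨changeLevel hd ψ.1, by rw [conductor_changeLevel, ψ.2.1],
      by rw [← map_pow, ψ.2.2, map_one]⟩
  refine (Nat.card_congr (Equiv.ofBijective f ⟨fun ψ ψ' h => ?_, ?_⟩)).symm
  · exact Subtype.ext (changeLevel_injective hd (congrArg Subtype.val h))
  · rintro ⟨χ, hχd, hχk⟩
    have hχ : χ.FactorsThrough d := hχd ▸ χ.factorsThrough_conductor
    obtain ⟨-, ψ, rfl⟩ := hχ
    refine ⟨⟨ψ, ?_, ?_⟩, rfl⟩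
    · rwa [conductor_changeLevel] at hχd
    · rwa [← map_pow, changeLevel_eq_one_iff] at hχk

theorem factorsThrough_of_ker_unitsMap_le_range_pow {n d : ℕ} [NeZero n] {hd : d ∣ n}
    (hker : (ZMod.unitsMap hd).ker ≤ (powMonoidHom k).range) {χ : DirichletCharacter R n}
    (hχ : χ ^ k = 1) : χ.FactorsThrough d := by
  refine (factorsThrough_iff_ker_unitsMap hd).mpr fun u hu => ?_
  obtain ⟨v, rfl⟩ := hker hu
  rw [MonoidHom.mem_ker, powMonoidHom_apply, Units.ext_iff, MulChar.coe_toUnitHom,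
    Units.val_pow_eq_pow_val, map_pow, ← MulChar.pow_apply_coe, hχ, MulChar.one_apply_coe,
    Units.val_one]

theorem not_isPrimitive_of_factorsThrough {n d : ℕ} {χ : DirichletCharacter R n}
    (h : χ.FactorsThrough d) (hd : d < n) : ¬χ.IsPrimitive :=
  fun hχ => ((Nat.sInf_le h : χ.conductor ≤ d).trans_lt hd).ne hχ

theorem countPrimitivePowEqOne_four_two_pow {r : ℕ} (hr : 5 ≤ r) :
    countPrimitivePowEqOne R 4 (2 ^ r) = 0 := by
  have : IsEmpty {χ : DirichletCharacter R (2 ^ r) // χ.IsPrimitive ∧ χ ^ 4 = 1} :=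
    ⟨fun χ => not_isPrimitive_of_factorsThrough
      (factorsThrough_of_ker_unitsMap_le_range_pow (ZMod.ker_unitsMap_le_range_pow_four
        (by omega : 4 ≤ r)) χ.2.2) (Nat.pow_lt_pow_right (by norm_num) (by omega)) χ.2.1⟩
  exact Nat.card_of_isEmpty

end CommMonoidWithZero

theorem countPowEqOne_eq_card_units {R : Type*} [CommRing R] (k n : ℕ) [NeZero n]
    [HasEnoughRootsOfUnity R (Monoid.exponent (ZMod n)ˣ)] :
    countPowEqOne R k n = Nat.card {u : (ZMod n)ˣ // u ^ k = 1} := by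
  obtain ⟨e⟩ := CommGroup.monoidHom_mulEquiv_of_hasEnoughRootsOfUnity (ZMod n)ˣ R
  exact (MulChar.mulEquivToUnitHom.trans e).card_pow_eq_one k

section IsDomain

variable {R : Type*} [CommRing R] [IsDomain R] (k : ℕ)

theorem sum_divisors_countPrimitivePowEqOne (n : ℕ) [NeZero n] :
    ∑ d ∈ n.divisors, countPrimitivePowEqOne R k d = countPowEqOne R k n := by
  classical
  have := Fintype.ofFinite (DirichletCharacter R n)
  rw [Finset.sum_congr rfl fun d hd =>
    (card_conductor_eq_and_pow_eq_one (Nat.dvd_of_mem_divisors hd)).symm]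
  simp only [countPowEqOne, Nat.card_eq_fintype_card, Fintype.card_subtype]
  rw [Finset.card_eq_sum_card_fiberwise (f := conductor) (t := n.divisors)
    fun χ _ => Nat.mem_divisors.mpr ⟨conductor_dvd_level χ, NeZero.ne n⟩]
  simp only [Finset.filter_filter, and_comm]

theorem countPowEqOne_prime_pow_succ {p : ℕ} (hp : p.Prime) (r : ℕ) :
    countPowEqOne R k (p ^ (r + 1)) =
      countPrimitivePowEqOne R k (p ^ (r + 1)) + countPowEqOne R k (p ^ r) := by
  have := Fact.mk hp
  rw [← sum_divisors_countPrimitivePowEqOne, ← sum_divisors_countPrimitivePowEqOne,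
    Nat.sum_divisors_prime_pow hp, Nat.sum_divisors_prime_pow hp, Finset.sum_range_succ, add_comm]

end IsDomain

section Complex

noncomputable def arithCountPrimitivePowEqOne (k : ℕ) : ArithmeticFunction ℤ :=
  ⟨fun n => if n = 0 then 0 else countPrimitivePowEqOne ℂ k n, if_pos rfl⟩

theorem arithCountPrimitivePowEqOne_apply {k n : ℕ} (hn : n ≠ 0) :
    arithCountPrimitivePowEqOne k n = countPrimitivePowEqOne ℂ k n :=
  if_neg hn

theorem arithCountPrimitivePowEqOne_mul_zeta_apply {k n : ℕ} (hn : n ≠ 0) :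
    (arithCountPrimitivePowEqOne k * (ζ : ArithmeticFunction ℤ)) n = countPowEqOne ℂ k n := by
  have := NeZero.mk hn
  rw [coe_mul_zeta_apply, ← sum_divisors_countPrimitivePowEqOne, Nat.cast_sum]
  exact Finset.sum_congr rfl fun d hd =>
    arithCountPrimitivePowEqOne_apply (Nat.pos_of_mem_divisors hd).ne'

variable (k : ℕ)

theorem isMultiplicative_arithCountPrimitivePowEqOne :
    (arithCountPrimitivePowEqOne k).IsMultiplicative := by
  refine .of_mul_zeta (IsMultiplicative.iff_ne_zero.mpr ⟨?_, fun {m n} hm hn hmn => ?_⟩)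
  · rw [coe_mul_zeta_apply, Nat.divisors_one, Finset.sum_singleton,
      arithCountPrimitivePowEqOne_apply one_ne_zero, countPrimitivePowEqOne_one, Nat.cast_one]
  · have := NeZero.mk hm
    have := NeZero.mk hn
    rw [arithCountPrimitivePowEqOne_mul_zeta_apply (mul_ne_zero hm hn),
      arithCountPrimitivePowEqOne_mul_zeta_apply hm, arithCountPrimitivePowEqOne_mul_zeta_apply hn,
      countPowEqOne_eq_card_units, countPowEqOne_eq_card_units, countPowEqOne_eq_card_units,
      ZMod.card_units_pow_eq_one_mul k hmn, Nat.cast_mul]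

theorem countPrimitivePowEqOne_mul {m n : ℕ} (h : m.Coprime n) :
    countPrimitivePowEqOne ℂ k (m * n) =
      countPrimitivePowEqOne ℂ k m * countPrimitivePowEqOne ℂ k n := by
  rcases eq_or_ne m 0 with rfl | hm
  · rw [(Nat.coprime_zero_left n).mp h, mul_one, countPrimitivePowEqOne_one, mul_one]
  rcases eq_or_ne n 0 with rfl | hn
  · rw [(Nat.coprime_zero_right m).mp h, one_mul, countPrimitivePowEqOne_one, one_mul]
  have := (isMultiplicative_arithCountPrimitivePowEqOne k).map_mul_of_coprime h
  rwa [arithCountPrimitivePowEqOne_apply (mul_ne_zero hm hn),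
    arithCountPrimitivePowEqOne_apply hm, arithCountPrimitivePowEqOne_apply hn, ← Nat.cast_mul,
    Nat.cast_inj] at this

theorem countPowEqOne_of_isCyclic (n : ℕ) [NeZero n] [IsCyclic (ZMod n)ˣ] :
    countPowEqOne ℂ k n = n.totient.gcd k := by
  rw [countPowEqOne_eq_card_units, IsCyclic.card_pow_eq_one, Nat.card_eq_fintype_card,
    ZMod.card_units_eq_totient]

theorem countPrimitivePowEqOne_prime {p : ℕ} (hp : p.Prime) :
    countPrimitivePowEqOne ℂ k p + 1 = (p - 1).gcd k := by
  have := Fact.mk hp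
  have := ZMod.isCyclic_units_prime hp
  have h := countPowEqOne_prime_pow_succ (R := ℂ) k hp 0
  rwa [zero_add, pow_one, pow_zero, countPowEqOne_one, countPowEqOne_of_isCyclic,
    Nat.totient_prime hp, eq_comm] at h

theorem countPowEqOne_odd_prime_pow_succ {p : ℕ} (hp : p.Prime) (hp2 : p ≠ 2) (r : ℕ) :
    countPowEqOne ℂ k (p ^ (r + 1)) = (p ^ r * (p - 1)).gcd k := by
  have := Fact.mk hp
  have := ZMod.isCyclic_units_of_prime_pow p hp hp2 (r + 1)
  rw [countPowEqOne_of_isCyclic, Nat.totient_prime_pow_succ hp]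

theorem countPrimitivePowEqOne_odd_prime_pow {p : ℕ} (hp : p.Prime) (hp2 : p ≠ 2)
    (hpk : ¬p ∣ k) {r : ℕ} (hr : 2 ≤ r) : countPrimitivePowEqOne ℂ k (p ^ r) = 0 := by
  obtain ⟨s, rfl⟩ := Nat.exists_eq_add_of_le' hr
  rw [show s + 2 = s + 1 + 1 from rfl]
  have hcop (j : ℕ) : (p ^ j).Coprime k := (hp.coprime_iff_not_dvd.mpr hpk).pow_left j
  have h := countPowEqOne_prime_pow_succ (R := ℂ) k hp (s + 1)
  rw [countPowEqOne_odd_prime_pow_succ k hp hp2, countPowEqOne_odd_prime_pow_succ k hp hp2,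
    (hcop _).gcd_mul_left_cancel, (hcop _).gcd_mul_left_cancel] at h
  omega

theorem countPowEqOne_four_two_pow_of_le {r : ℕ} (hr : r ≤ 4) :
    countPowEqOne ℂ 4 (2 ^ r) = 2 ^ (r - 1) := by
  rw [countPowEqOne_eq_card_units, Nat.card_eq_fintype_card]
  interval_cases r <;> decide

end Complex

end DirichletCharacter

open DirichletCharacter

theorem b₄_multiplicative_and_values :
    b₄ 1 = 1 ∧
    (∀ m n : ℕ, Nat.Coprime m n → b₄ (m * n) = b₄ m * b₄ n) ∧
    b₄ 2 = 0 ∧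
    b₄ 4 = 1 ∧
    b₄ 8 = 2 ∧
    b₄ 16 = 4 ∧
    (∀ r : ℕ, 5 ≤ r → b₄ (2 ^ r) = 0) ∧
    (∀ p : ℕ, p.Prime → p ≠ 2 →
      (p % 4 = 3 → b₄ p = 1) ∧
      (p % 4 = 1 → b₄ p = 3) ∧
      (∀ r : ℕ, 2 ≤ r → b₄ (p ^ r) = 0)) := by
  rw [show b₄ = countPrimitivePowEqOne ℂ 4 from rfl]
  have two_pow (r : ℕ) (hr : r ≤ 3) :
      countPrimitivePowEqOne ℂ 4 (2 ^ (r + 1)) + 2 ^ (r - 1) = 2 ^ r := by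
    have h := countPowEqOne_prime_pow_succ (R := ℂ) 4 Nat.prime_two r
    rwa [countPowEqOne_four_two_pow_of_le (by omega), countPowEqOne_four_two_pow_of_le (by omega),
      eq_comm] at h
  refine ⟨countPrimitivePowEqOne_one ℂ 4, fun m n => countPrimitivePowEqOne_mul 4,
    by simpa using two_pow 0, by simpa using two_pow 1, by simpa using two_pow 2,
    by simpa using two_pow 3, fun r => countPrimitivePowEqOne_four_two_pow,
    fun p hp hp2 => ?_⟩
  have hprime : countPrimitivePowEqOne ℂ 4 p + 1 = Nat.gcd ((p - 1) % 4) 4 := by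
    rw [← Nat.gcd_rec, Nat.gcd_comm]
    exact countPrimitivePowEqOne_prime 4 hp
  have hp4 : ¬p ∣ 4 := fun h =>
    hp2 ((Nat.prime_dvd_prime_iff_eq hp Nat.prime_two).mp (hp.dvd_of_dvd_pow (n := 2) h))
  refine ⟨fun h3 => ?_, fun h1 => ?_,
    fun r => countPrimitivePowEqOne_odd_prime_pow 4 hp hp2 hp4⟩
  · rw [show (p - 1) % 4 = 2 by omega] at hprime
    simpa using hprime
  · rw [show (p - 1) % 4 = 0 by omega] at hprime
    simpa using hprime
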